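/- In the setting of the single positive cycle of even length k in type B_n (k > 2): the roots of B_n that are moved by s but have zero orthogonal projection onto the plane V_{k/2} (the eigenplane of rotation angle 2π/k) are exactly ±(ε_j + ε_{k−j+1}) for j = 1,…,k/2; there are k of them, and each has nonzero projection onto the eigenplane V_{k/2−1} (rotation angle 4π/k). -/

import Mathlib

/-!
Under the projection with parameter `z`, `ε_i` goes to `c z ^ e(i)` for `i < k`, where
`e` permutes `0, …, k - 1`, and to `0` for `i ≥ k`; the coordinates `i ≥ k` are also fixed by the
cycle, so a moved root involves some `ε_i` with `i < k`. For `z` a primitive `k`-th root of unity,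
`z ^ (k / 2) = -1`, so for distinct `i, j < k` the projections of `ε_i` and `ε_j` never coincide,
and they are opposite exactly
when `e(i)` and `e(j)` differ by `k / 2`, which happens exactly when `i + j = k - 1`. Hence the only
moved roots in the kernel are `±(ε_i + ε_{k-1-i})`. For `z ^ 2`, whose order is `k / 2`, the two
summands in the projection of `ε_i + ε_{k-1-i}` coincide instead of cancelling.
-/

/-- The standard basis vector `ε_i` of `ℝⁿ`. -/
def eB (n : ℕ) (i : Fin n) : Fin n → ℝ := Pi.single i 1

/-- The roots of type `B_n`: `±ε_i ± ε_j` (`i ≠ j`) and `±ε_i`. -/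
def DeltaB (n : ℕ) : Set (Fin n → ℝ) :=
  {v | (∃ i j : Fin n, i ≠ j ∧ v = eB n i - eB n j) ∨
       (∃ i j : Fin n, i < j ∧ (v = eB n i + eB n j ∨ v = -(eB n i + eB n j))) ∨
       (∃ i : Fin n, v = eB n i ∨ v = -(eB n i))}

/-- The inverse of the positive cycle
`ε₁ → ε₂ → ε₄ → ⋯ → ε_k → ε_{k-1} → ⋯ → ε₃ → ε₁` (1-based), written 0-based:
`g` sends an index to its predecessor under the cycle, so that
`α ∘ g` is the image of `α` under the cycle. -/
def gCyc (n k : ℕ) (hkn : k ≤ n) (hke : k % 2 = 0) (j : Fin n) : Fin n :=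
  if h1 : k ≤ (j : ℕ) then j
  else if h2 : (j : ℕ) = 1 then ⟨0, j.pos⟩
  else if h3 : (j : ℕ) % 2 = 1 then ⟨(j : ℕ) - 2, by have := j.isLt; omega⟩
  else if h4 : (j : ℕ) = k - 2 then ⟨k - 1, by omega⟩
  else ⟨(j : ℕ) + 2, by have := j.isLt; omega⟩

/-- The orthogonal projection onto the eigenplane of the cycle corresponding to
the eigenvalue `z`, in complex coordinates: `ε_{2j+1} ↦ c z^j`, `ε_{2j} ↦ c z^{-j}`
(1-based indices), with `c = √(2/k)`. -/
noncomputable def projB (n k : ℕ) (hkn : k ≤ n) (z : ℂ) (α : Fin n → ℝ) : ℂ :=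
  (Real.sqrt (2 / (k : ℝ)) : ℂ) *
    ((∑ j : Fin (k / 2),
        ((α ⟨2 * (j : ℕ), by have := j.isLt; omega⟩ : ℝ) : ℂ) * z ^ (j : ℕ)) +
      ∑ j : Fin (k / 2),
        ((α ⟨2 * (j : ℕ) + 1, by have := j.isLt; omega⟩ : ℝ) : ℂ)
          * z ^ (-(((j : ℕ) : ℤ) + 1)))

theorem IsPrimitiveRoot.pow_half_eq_neg_one {R : Type*} [CommRing R] [IsDomain R] {ζ : R}
    {k : ℕ} (hζ : IsPrimitiveRoot ζ k) (hk : Even k) (hk0 : 0 < k) : ζ ^ (k / 2) = -1 :=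
  (hζ.pow hk0 (Nat.div_two_mul_two_of_even hk).symm).eq_neg_one_of_two_right

theorem IsPrimitiveRoot.pow_eq_neg_pow_iff {R : Type*} [CommRing R] [IsDomain R] {ζ : R}
    {k a b : ℕ} (hζ : IsPrimitiveRoot ζ k) (hk : Even k) (ha : a < k) (hb : b < k) :
    ζ ^ a = -ζ ^ b ↔ a = b + k / 2 ∨ b = a + k / 2 := by
  have hhalf := hζ.pow_half_eq_neg_one hk (by omega)
  have hneg (c : ℕ) : -ζ ^ c = ζ ^ (c + k / 2) := by rw [pow_add, hhalf, mul_neg_one]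
  constructor
  · intro h
    rw [hneg] at h
    rcases lt_or_ge (b + k / 2) k with hlt | hge
    · exact .inl (hζ.pow_inj ha hlt h)
    · have hwrap : ζ ^ (b + k / 2) = ζ ^ (b + k / 2 - k) := by
        rw [← mul_one (ζ ^ (b + k / 2 - k)), ← hζ.pow_eq_one, ← pow_add, Nat.sub_add_cancel hge]
      have := hζ.pow_inj ha (by omega) (h.trans hwrap)
      have := Nat.div_two_mul_two_of_even hk
      omega
  · rintro (rfl | rfl)
    · rw [hneg]
    · rw [← hneg, neg_neg]

/-- `projB` sends `ε_{2j}` to `c z ^ j` and `ε_{2j+1}` to `c z ^ (-(j + 1)) = c z ^ (k - j - 1)`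
(0-based), so `ε_i` goes to `c z ^ cycleExp k i` for `i < k`. -/
def cycleExp (k i : ℕ) : ℕ := if i % 2 = 0 then i / 2 else k - i / 2 - 1

noncomputable def cycleWeight (k : ℕ) (z : ℂ) (i : ℕ) : ℂ :=
  if i < k then z ^ cycleExp k i else 0

section CycleExp

variable {k i j : ℕ}

theorem cycleExp_lt (hi : i < k) : cycleExp k i < k := by
  unfold cycleExp; split_ifs <;> omega

theorem cycleExp_inj (hi : i < k) (hj : j < k) : cycleExp k i = cycleExp k j ↔ i = j := by
  unfold cycleExp; split_ifs <;> omega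

theorem cycleExp_eq_add_half_iff (hk : Even k) (hi : i < k) (hj : j < k) :
    cycleExp k i = cycleExp k j + k / 2 ∨ cycleExp k j = cycleExp k i + k / 2 ↔ i + j + 1 = k := by
  have := Nat.div_two_mul_two_of_even hk
  unfold cycleExp; split_ifs <;> omega

end CycleExp

section CycleWeight

variable {k i j : ℕ} {z : ℂ}

theorem cycleWeight_eq_zero_iff (hz : z ≠ 0) : cycleWeight k z i = 0 ↔ k ≤ i := by
  unfold cycleWeight
  split_ifs with hi
  · exact iff_of_false (pow_ne_zero _ hz) (by omega)
  · exact iff_of_true rfl (by omega)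

theorem cycleWeight_eq_iff (hz : IsPrimitiveRoot z k) :
    cycleWeight k z i = cycleWeight k z j ↔ i = j ∨ (k ≤ i ∧ k ≤ j) := by
  unfold cycleWeight
  split_ifs with hi hj hj
  · exact ⟨fun h => .inl ((cycleExp_inj hi hj).1 (hz.pow_inj (cycleExp_lt hi) (cycleExp_lt hj) h)),
      by rintro (rfl | h) <;> [rfl; omega]⟩
  · exact iff_of_false (pow_ne_zero _ (hz.ne_zero (by omega))) (by omega)
  · exact iff_of_false (pow_ne_zero _ (hz.ne_zero (by omega))).symm (by omega)
  · exact iff_of_true rfl (.inr ⟨by omega, by omega⟩)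

theorem cycleWeight_eq_neg_iff (hz : IsPrimitiveRoot z k) (hk : Even k) :
    cycleWeight k z i = -cycleWeight k z j ↔ (k ≤ i ∧ k ≤ j) ∨ i + j + 1 = k := by
  unfold cycleWeight
  split_ifs with hi hj hj
  · rw [hz.pow_eq_neg_pow_iff hk (cycleExp_lt hi) (cycleExp_lt hj),
      cycleExp_eq_add_half_iff hk hi hj]
    omega
  · rw [neg_zero]
    exact iff_of_false (pow_ne_zero _ (hz.ne_zero (by omega))) (by omega)
  · exact iff_of_false (neg_ne_zero.2 (pow_ne_zero _ (hz.ne_zero (by omega)))).symm (by omega)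
  · exact iff_of_true neg_zero.symm (.inl ⟨by omega, by omega⟩)

theorem cycleWeight_mirror (hk : Even k) (hz : z ^ (k / 2) = 1) (hi : i < k) :
    cycleWeight k z (k - 1 - i) = cycleWeight k z i := by
  have hexp : cycleExp k (k - 1 - i) = cycleExp k i + k / 2 ∨
      cycleExp k i = cycleExp k (k - 1 - i) + k / 2 :=
    (cycleExp_eq_add_half_iff hk (by omega) hi).2 (by omega)
  unfold cycleWeight
  rw [if_pos (by omega), if_pos hi]
  rcases hexp with h | h <;> rw [h, pow_add, hz, mul_one]

end CycleWeight

theorem sum_ite_two_mul_add_eq {M : Type*} [AddCommMonoid M] {m r c : ℕ} (hr : r < 2)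
    (f : ℕ → M) :
    ∑ j : Fin m, (if 2 * (j : ℕ) + r = c then f j else 0) =
      if c % 2 = r ∧ c < 2 * m then f (c / 2) else 0 := by
  split_ifs with hc
  · rw [Fintype.sum_eq_single ⟨c / 2, by omega⟩
      fun j hj => if_neg fun h => hj (Fin.ext (by simp only; omega))]
    exact if_pos (by simp only; omega)
  · exact Finset.sum_eq_zero fun j _ => if_neg (by omega)

section Projection

variable {n k : ℕ} {hkn : k ≤ n} {z : ℂ}

theorem projB_add (α β : Fin n → ℝ) :
    projB n k hkn z (α + β) = projB n k hkn z α + projB n k hkn z β := by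
  simp only [projB, Pi.add_apply, Complex.ofReal_add, add_mul, Finset.sum_add_distrib]
  ring

theorem projB_neg (α : Fin n → ℝ) : projB n k hkn z (-α) = -projB n k hkn z α := by
  simp only [projB, Pi.neg_apply, Complex.ofReal_neg, neg_mul, Finset.sum_neg_distrib]
  ring

theorem projB_sub (α β : Fin n → ℝ) :
    projB n k hkn z (α - β) = projB n k hkn z α - projB n k hkn z β := by
  rw [sub_eq_add_neg, projB_add, projB_neg, sub_eq_add_neg]

theorem projB_eB (hk : Even k) (hz : z ^ k = 1) (i : Fin n) :
    projB n k hkn z (eB n i) = Real.sqrt (2 / k) * cycleWeight k z i := by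
  have hinv (j : ℕ) (hj : j < k) : z ^ (-((j : ℤ) + 1)) = z ^ (k - j - 1) := by
    rw [show -((j : ℤ) + 1) = -((j + 1 : ℕ) : ℤ) by push_cast; ring, zpow_neg, zpow_natCast]
    exact inv_eq_of_mul_eq_one_left (by rw [← pow_add, show k - j - 1 + (j + 1) = k by omega, hz])
  simp only [projB, eB, Pi.single_apply, Fin.ext_iff, apply_ite ((↑) : ℝ → ℂ),
    Complex.ofReal_one, Complex.ofReal_zero, ite_mul, one_mul, zero_mul]
  have hev := sum_ite_two_mul_add_eq (m := k / 2) (c := i) two_pos (z ^ ·)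
  simp only [add_zero] at hev
  rw [hev, sum_ite_two_mul_add_eq one_lt_two (fun j => z ^ (-((j : ℤ) + 1)))]
  rw [Nat.two_mul_div_two_of_even hk, cycleWeight, cycleExp]
  split_ifs <;> first | omega | simp only [add_zero, zero_add]
  rw [hinv _ (by omega)]

end Projection

section Cycle

variable {n k : ℕ} {hkn : k ≤ n} {hke : k % 2 = 0}

theorem gCyc_of_le {j : Fin n} (hj : k ≤ (j : ℕ)) : gCyc n k hkn hke j = j := dif_pos hj

theorem gCyc_lt {j : Fin n} (hj : (j : ℕ) < k) : (gCyc n k hkn hke j : ℕ) < k := by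
  unfold gCyc; split_ifs <;> simp only [hj] <;> omega

theorem gCyc_ne_of_lt_half (h2 : 2 < k) {j : Fin n} (hj : (j : ℕ) < k / 2) :
    (gCyc n k hkn hke j : ℕ) ≠ j ∧ (gCyc n k hkn hke j : ℕ) ≠ k - 1 - j := by
  unfold gCyc; split_ifs <;> simp only [ne_eq] <;> omega

theorem exists_lt_ne_zero_of_moved {α : Fin n → ℝ}
    (h : (fun j => α (gCyc n k hkn hke j)) ≠ α) : ∃ x : Fin n, (x : ℕ) < k ∧ α x ≠ 0 := by
  contrapose! h
  funext x
  by_cases hx : k ≤ (x : ℕ)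
  · rw [gCyc_of_le hx]
  · rw [h _ (gCyc_lt (by omega)), h x (by omega)]

theorem lt_or_lt_of_moved {α : Fin n → ℝ} {i j : Fin n} (hα : ∀ x, x ≠ i → x ≠ j → α x = 0)
    (h : (fun j => α (gCyc n k hkn hke j)) ≠ α) : (i : ℕ) < k ∨ (j : ℕ) < k := by
  obtain ⟨x, hxk, hx⟩ := exists_lt_ne_zero_of_moved h
  by_contra! hij
  exact hx (hα x (by rintro rfl; omega) (by rintro rfl; omega))

theorem neg_moved {α : Fin n → ℝ} (h : (fun j => α (gCyc n k hkn hke j)) ≠ α) :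
    (fun j => (-α) (gCyc n k hkn hke j)) ≠ -α :=
  fun h' => h (neg_injective h')

end Cycle

def mirrorRoot {n k : ℕ} (hkn : k ≤ n) (a : Fin (k / 2)) : Fin n → ℝ :=
  eB n ⟨a, by omega⟩ + eB n ⟨k - 1 - a, by omega⟩

section MirrorRoot

variable {n k : ℕ} {hkn : k ≤ n}

theorem mirrorRoot_apply (a : Fin (k / 2)) (x : Fin n) :
    mirrorRoot hkn a x =
      (if (x : ℕ) = a then 1 else 0) + (if (x : ℕ) = k - 1 - a then 1 else 0) := by
  simp [mirrorRoot, eB, Pi.single_apply, Fin.ext_iff]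

theorem mirrorRoot_injective : Function.Injective (mirrorRoot hkn) := by
  intro a b h
  have := congrFun h ⟨a, by omega⟩
  simp only [mirrorRoot_apply] at this
  ext
  split_ifs at this <;> first | omega | norm_num at this

theorem mirrorRoot_ne_neg (a b : Fin (k / 2)) : mirrorRoot hkn a ≠ -mirrorRoot hkn b := by
  intro h
  have := congrFun h ⟨a, by omega⟩
  simp only [Pi.neg_apply, mirrorRoot_apply] at this
  split_ifs at this <;> first | omega | norm_num at this

theorem mirrorRoot_mem_DeltaB (a : Fin (k / 2)) : mirrorRoot hkn a ∈ DeltaB n :=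
  .inr <| .inl ⟨_, _, Fin.mk_lt_mk.2 (by omega), .inl rfl⟩

theorem neg_mirrorRoot_mem_DeltaB (a : Fin (k / 2)) : -mirrorRoot hkn a ∈ DeltaB n :=
  .inr <| .inl ⟨_, _, Fin.mk_lt_mk.2 (by omega), .inr rfl⟩

theorem mirrorRoot_moved {hke : k % 2 = 0} (h2 : 2 < k) (a : Fin (k / 2)) :
    (fun j => mirrorRoot hkn a (gCyc n k hkn hke j)) ≠ mirrorRoot hkn a := by
  intro h
  have hg := gCyc_ne_of_lt_half (hkn := hkn) (hke := hke) h2 (j := ⟨a, by omega⟩) a.isLt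
  have := congrFun h ⟨a, by omega⟩
  simp only [mirrorRoot_apply] at this
  simp only at hg
  split_ifs at this <;> first | omega | norm_num at this

end MirrorRoot

theorem ofReal_sqrt_two_div_ne_zero {k : ℕ} (hk : 0 < k) : (Real.sqrt (2 / k) : ℂ) ≠ 0 :=
  Complex.ofReal_ne_zero.2 (Real.sqrt_ne_zero'.2 (by positivity))

section Vanishing

variable {n k : ℕ} {hkn : k ≤ n} {z : ℂ}

theorem projB_eB_ne_zero (hk : Even k) (hz : IsPrimitiveRoot z k) {i : Fin n} (hi : (i : ℕ) < k) :
    projB n k hkn z (eB n i) ≠ 0 := by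
  rw [projB_eB hk hz.pow_eq_one]
  exact mul_ne_zero (ofReal_sqrt_two_div_ne_zero (by omega))
    ((cycleWeight_eq_zero_iff (hz.ne_zero (by omega))).not.2 (by omega))

theorem projB_eB_sub_ne_zero (hk : Even k) (hz : IsPrimitiveRoot z k) {i j : Fin n} (hij : i ≠ j)
    (hlt : (i : ℕ) < k ∨ (j : ℕ) < k) : projB n k hkn z (eB n i - eB n j) ≠ 0 := by
  rw [projB_sub, projB_eB hk hz.pow_eq_one, projB_eB hk hz.pow_eq_one, ← mul_sub]
  refine mul_ne_zero (ofReal_sqrt_two_div_ne_zero (by omega)) (sub_ne_zero.2 fun h => ?_)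
  rcases (cycleWeight_eq_iff hz).1 h with h | h
  · exact hij (Fin.ext h)
  · omega

theorem exists_mirrorRoot_of_projB_eq_zero (hk : Even k) (hz : IsPrimitiveRoot z k) {i j : Fin n}
    (hij : i < j) (hlt : (i : ℕ) < k ∨ (j : ℕ) < k) (h : projB n k hkn z (eB n i + eB n j) = 0) :
    ∃ a, eB n i + eB n j = mirrorRoot hkn a := by
  rw [projB_add, projB_eB hk hz.pow_eq_one, projB_eB hk hz.pow_eq_one, ← mul_add, mul_eq_zero,
    add_eq_zero_iff_eq_neg] at h
  obtain h | h := h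
  · exact absurd h (ofReal_sqrt_two_div_ne_zero (by omega))
  obtain h | h := (cycleWeight_eq_neg_iff hz hk).1 h
  · omega
  have hij' := Fin.lt_def.1 hij
  have hj : j = ⟨k - 1 - i, by omega⟩ := Fin.ext (by simp only; omega)
  exact ⟨⟨i, by omega⟩, congrArg (eB n i + eB n ·) hj⟩

theorem projB_mirrorRoot (hk : Even k) (hz : z ^ k = 1) (a : Fin (k / 2)) :
    projB n k hkn z (mirrorRoot hkn a) =
      Real.sqrt (2 / k) * (cycleWeight k z a + cycleWeight k z (k - 1 - a)) := by
  rw [mirrorRoot, projB_add, projB_eB hk hz, projB_eB hk hz, mul_add]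

theorem projB_mirrorRoot_eq_zero (hk : Even k) (hz : IsPrimitiveRoot z k) (a : Fin (k / 2)) :
    projB n k hkn z (mirrorRoot hkn a) = 0 := by
  rw [projB_mirrorRoot hk hz.pow_eq_one,
    add_eq_zero_iff_eq_neg.2 ((cycleWeight_eq_neg_iff hz hk).2 (.inr (by omega))), mul_zero]

theorem projB_mirrorRoot_ne_zero (hk : Even k) (hz : z ^ (k / 2) = 1) (a : Fin (k / 2)) :
    projB n k hkn z (mirrorRoot hkn a) ≠ 0 := by
  have ha := a.isLt
  have hzk : z ^ k = 1 := by rw [← Nat.div_two_mul_two_of_even hk, pow_mul, hz, one_pow]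
  have hz0 : z ≠ 0 := by
    rintro rfl
    exact zero_ne_one ((zero_pow (by omega)).symm.trans hz)
  rw [projB_mirrorRoot hk hzk, cycleWeight_mirror hk hz (by omega), ← two_mul]
  exact mul_ne_zero (ofReal_sqrt_two_div_ne_zero (by omega))
    (mul_ne_zero two_ne_zero ((cycleWeight_eq_zero_iff hz0).not.2 (by omega)))

end Vanishing

theorem moved_root_projB_eq_zero_iff {n k : ℕ} {hkn : k ≤ n} (hke : k % 2 = 0) (h2 : 2 < k)
    {z : ℂ} (hz : IsPrimitiveRoot z k) (α : Fin n → ℝ) :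
    α ∈ DeltaB n ∧ (fun j => α (gCyc n k hkn hke j)) ≠ α ∧ projB n k hkn z α = 0 ↔
      ∃ a, α = mirrorRoot hkn a ∨ α = -mirrorRoot hkn a := by
  have hk : Even k := Nat.even_iff.2 hke
  constructor
  · rintro ⟨hΔ, hmv, hproj⟩
    rcases hΔ with ⟨i, j, hij, rfl⟩ | ⟨i, j, hij, rfl | rfl⟩ | ⟨i, rfl | rfl⟩
    · exact absurd hproj (projB_eB_sub_ne_zero hk hz hij
        (lt_or_lt_of_moved (fun x hi hj => by simp [eB, hi, hj]) hmv))
    · obtain ⟨a, ha⟩ := exists_mirrorRoot_of_projB_eq_zero hk hz hij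
        (lt_or_lt_of_moved (fun x hi hj => by simp [eB, hi, hj]) hmv) hproj
      exact ⟨a, .inl ha⟩
    · rw [projB_neg, neg_eq_zero] at hproj
      obtain ⟨a, ha⟩ := exists_mirrorRoot_of_projB_eq_zero hk hz hij
        (lt_or_lt_of_moved (fun x hi hj => by simp [eB, hi, hj]) hmv) hproj
      exact ⟨a, .inr (by rw [ha])⟩
    · exact absurd hproj (projB_eB_ne_zero hk hz
        ((lt_or_lt_of_moved (j := i) (fun x hi _ => by simp [eB, hi]) hmv).elim id id))
    · rw [projB_neg, neg_eq_zero] at hproj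
      exact absurd hproj (projB_eB_ne_zero hk hz
        ((lt_or_lt_of_moved (j := i) (fun x hi _ => by simp [eB, hi]) hmv).elim id id))
  · rintro ⟨a, rfl | rfl⟩
    · exact ⟨mirrorRoot_mem_DeltaB a, mirrorRoot_moved h2 a, projB_mirrorRoot_eq_zero hk hz a⟩
    · exact ⟨neg_mirrorRoot_mem_DeltaB a, neg_moved (mirrorRoot_moved h2 a),
        by rw [projB_neg, projB_mirrorRoot_eq_zero hk hz a, neg_zero]⟩

theorem ncard_setOf_eq_or_eq_neg {ι V : Type*} [Finite ι] [AddGroup V] {f : ι → V}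
    (hf : Function.Injective f) (hneg : ∀ a b, f a ≠ -f b) :
    {v | ∃ a, v = f a ∨ v = -f a}.ncard = 2 * Nat.card ι := by
  have hset : {v | ∃ a, v = f a ∨ v = -f a} = Set.range f ∪ Set.range (-f) := by
    ext v
    simp only [Set.mem_ofPred_eq, Set.mem_union, Set.mem_range, Pi.neg_apply, exists_or, eq_comm]
  have hdisj : Disjoint (Set.range f) (Set.range (-f)) :=
    Set.disjoint_left.2 fun _ ⟨a, ha⟩ ⟨b, hb⟩ => hneg a b (ha.trans hb.symm)
  rw [hset, Set.ncard_union_eq hdisj, Set.ncard_range_of_injective hf,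
    Set.ncard_range_of_injective (f := -f) (neg_injective.comp hf), two_mul]

theorem stmt10 (n k : ℕ) (hke : k % 2 = 0) (h2 : 2 < k) (hkn : k ≤ n) :
    ({α | α ∈ DeltaB n ∧ (fun j => α (gCyc n k hkn hke j)) ≠ α ∧
        projB n k hkn (Complex.exp (2 * Real.pi * Complex.I / (k : ℂ))) α = 0}
      = {v | ∃ a : ℕ, ∃ ha : a < k / 2,
          v = eB n ⟨a, by omega⟩ + eB n ⟨k - 1 - a, by omega⟩ ∨
          v = -(eB n ⟨a, by omega⟩ + eB n ⟨k - 1 - a, by omega⟩)}) ∧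
    ({v : Fin n → ℝ | ∃ a : ℕ, ∃ ha : a < k / 2,
        v = eB n ⟨a, by omega⟩ + eB n ⟨k - 1 - a, by omega⟩ ∨
        v = -(eB n ⟨a, by omega⟩ + eB n ⟨k - 1 - a, by omega⟩)}.ncard = k) ∧
    (∀ v : Fin n → ℝ,
      (∃ a : ℕ, ∃ ha : a < k / 2,
        v = eB n ⟨a, by omega⟩ + eB n ⟨k - 1 - a, by omega⟩ ∨
        v = -(eB n ⟨a, by omega⟩ + eB n ⟨k - 1 - a, by omega⟩)) →
      projB n k hkn (Complex.exp (2 * Real.pi * Complex.I * 2 / (k : ℂ))) v ≠ 0) := by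
  have hk : Even k := Nat.even_iff.2 hke
  have hz := Complex.isPrimitiveRoot_exp k (by omega)
  have hz2 : Complex.exp (2 * Real.pi * Complex.I * 2 / k) ^ (k / 2) = 1 := by
    rw [show 2 * Real.pi * Complex.I * 2 / k = (2 : ℕ) * (2 * Real.pi * Complex.I / k) by
      push_cast; ring, Complex.exp_nat_mul, ← pow_mul, Nat.two_mul_div_two_of_even hk,
      hz.pow_eq_one]
  refine ⟨Set.ext fun α => (moved_root_projB_eq_zero_iff hke h2 hz α).trans Fin.exists_iff, ?_, ?_⟩
  · have hcard := ncard_setOf_eq_or_eq_neg (mirrorRoot_injective (hkn := hkn)) mirrorRoot_ne_neg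
    simp only [Nat.card_eq_fintype_card, Fintype.card_fin, Nat.two_mul_div_two_of_even hk,
      Fin.exists_iff] at hcard
    exact hcard
  · rintro v ⟨a, ha, rfl | rfl⟩
    · exact projB_mirrorRoot_ne_zero hk hz2 ⟨a, ha⟩
    · rw [projB_neg, neg_ne_zero]
      exact projB_mirrorRoot_ne_zero hk hz2 ⟨a, ha⟩
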